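/- Let f : ℂ^n → [0,∞) be twice continuously Fréchet differentiable over ℝ such that the Wirtinger Hessian is bounded by a constant B > 0, and let 0 < μ_c ≤ 1/B, τ ∈ (0,1), N ∈ ℕ. Let (z^t)_{t≥0} be generated by z^t = z^{t−1} − μ_t ∇_z f(z^{t−1}) from an arbitrary z^0 ∈ ℂ^n, where each step size satisfies μ_c ≤ μ_t ≤ μ_c τ^{−N} and either μ_t = μ_c or μ_t satisfies the Armijo–Goldstein inequality f(z^{t−1} − μ_t ∇_z f(z^{t−1})) − f(z^{t−1}) ≤ − μ_t ‖∇_z f(z^{t−1})‖₂². Then (i) f(z^t) − f(z^{t−1}) ≤ − μ_t ‖∇_z f(z^{t−1})‖₂² for all t ≥ 1; (ii) ‖∇_z f(z^t)‖₂² → 0 as t → ∞; and (iii) min_{t ∈ {0,…,T}} ‖∇_z f(z^t)‖₂² ≤ f(z^0) / (μ_c (T+1)) for every T ≥ 0. -/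

import Mathlib

open scoped InnerProductSpace


lemma aux_taylor {φ : ℝ → ℝ} {M : ℝ} (hφ : ContDiff ℝ 2 φ)
    (hM : ∀ t, deriv (deriv φ) t ≤ M) : φ 1 ≤ φ 0 + deriv φ 0 + M / 2 := by
  have h2 : (2 : WithTop ℕ∞) = 1 + 1 := rfl
  rw [h2, contDiff_succ_iff_deriv] at hφ
  obtain ⟨hφd, -, hφ1⟩ := hφ
  have hDd : Differentiable ℝ (deriv φ) := hφ1.differentiable one_ne_zero
  -- step 1 : deriv φ t ≤ deriv φ 0 + M * t for t ≥ 0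
  set u : ℝ → ℝ := fun t => deriv φ 0 + M * t - deriv φ t with hu_def
  have hu : ∀ x : ℝ, HasDerivAt u (M - deriv (deriv φ) x) x := by
    intro x
    have h1 : HasDerivAt (fun t : ℝ => deriv φ 0 + M * t) (M * 1) x :=
      ((hasDerivAt_id x).const_mul M).const_add _
    have h3 := h1.sub (hDd x).hasDerivAt
    rw [mul_one] at h3
    exact h3
  have humono : Monotone u :=
    monotone_of_hasDerivAt_nonneg hu (fun x => sub_nonneg.2 (hM x))
  have hstep1 : ∀ t : ℝ, 0 ≤ t → deriv φ t ≤ deriv φ 0 + M * t := by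
    intro t ht
    have := humono ht
    simp only [hu_def, mul_zero, add_zero, sub_self] at this
    linarith
  -- step 2
  set ψ : ℝ → ℝ := fun t => φ 0 + deriv φ 0 * t + M / 2 * t ^ 2 - φ t with hψ_def
  have hψ : ∀ x : ℝ, HasDerivAt ψ (deriv φ 0 + M * x - deriv φ x) x := by
    intro x
    have h1 : HasDerivAt (fun t : ℝ => φ 0 + deriv φ 0 * t + M / 2 * t ^ 2)
        (deriv φ 0 + M * x) x := by
      have ha : HasDerivAt (fun t : ℝ => φ 0 + deriv φ 0 * t) (deriv φ 0 * 1) x :=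
        ((hasDerivAt_id x).const_mul _).const_add _
      have hb : HasDerivAt (fun t : ℝ => M / 2 * t ^ 2) (M / 2 * (2 * x ^ 1)) x :=
        (hasDerivAt_pow 2 x).const_mul _
      have := ha.add hb
      convert this using 1
      · rfl
      · rfl
      · funext t; rfl
      ring
    exact h1.sub (hφd x).hasDerivAt
  have hψmono : MonotoneOn ψ (Set.Ici (0 : ℝ)) := by
    apply monotoneOn_of_hasDerivWithinAt_nonneg (convex_Ici 0)
      (Continuous.continuousOn (by
        exact (Differentiable.continuous fun x => (hψ x).differentiableAt)))
      (fun x _ => (hψ x).hasDerivWithinAt)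
    intro x hx
    rw [interior_Ici] at hx
    have := hstep1 x (le_of_lt hx)
    linarith
  have h01 := hψmono (Set.self_mem_Ici) (Set.mem_Ici.2 zero_le_one) zero_le_one
  simp only [hψ_def] at h01
  nlinarith [h01]

lemma aux_descent {n : ℕ} (f : EuclideanSpace ℂ (Fin n) → ℝ)
    (g : EuclideanSpace ℂ (Fin n) → EuclideanSpace ℂ (Fin n))
    (hC2 : ContDiff ℝ 2 f)
    (hgrad : ∀ z u, fderiv ℝ f z u = 2 * (⟪g z, u⟫_ℂ).re)
    (B : ℝ) (hB : 0 < B)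
    (hHess : ∀ z u : EuclideanSpace ℂ (Fin n),
      iteratedDeriv 2 (fun t : ℝ => f (z + t • u)) 0 ≤ 2 * B * ‖u‖ ^ 2)
    (μ : ℝ) (hμ : 0 < μ) (hμB : μ * B ≤ 1) (z : EuclideanSpace ℂ (Fin n)) :
    f (z - μ • g z) - f z ≤ - μ * ‖g z‖ ^ 2 := by
  set u : EuclideanSpace ℂ (Fin n) := (-μ) • g z with hu_def
  set φ : ℝ → ℝ := fun t => f (z + t • u) with hφ_def
  have hline : ∀ w : EuclideanSpace ℂ (Fin n), ContDiff ℝ 2 (fun t : ℝ => w + t • u) :=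
    fun w => contDiff_const.add (contDiff_id.smul contDiff_const)
  have hφC2 : ContDiff ℝ 2 φ := hC2.comp (hline z)
  have hD : ∀ t : ℝ, HasDerivAt φ (fderiv ℝ f (z + t • u) u) t := by
    intro t
    have hl : HasDerivAt (fun t : ℝ => z + t • u) u t := by
      simpa using ((hasDerivAt_id t).smul_const u).const_add z
    exact ((hC2.differentiable two_ne_zero) (z + t • u)).hasFDerivAt.comp_hasDerivAt t hl
  have hderiv : deriv φ = fun t => fderiv ℝ f (z + t • u) u := funext fun t => (hD t).deriv
  have hHb : ∀ t : ℝ, deriv (deriv φ) t ≤ 2 * B * ‖u‖ ^ 2 := by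
    intro t
    have key := hHess (z + t • u) u
    have heq : (fun s : ℝ => f (z + t • u + s • u)) = fun s => φ (t + s) := by
      funext s
      simp only [hφ_def, add_smul, add_assoc]
    rw [heq] at key
    have h2 : iteratedDeriv 2 (fun s => φ (t + s)) 0 = deriv (deriv φ) t := by
      rw [show (2 : ℕ) = 1 + 1 from rfl, iteratedDeriv_succ, iteratedDeriv_one]
      have : deriv (fun s => φ (t + s)) = fun s => deriv φ (t + s) :=
        funext fun s => deriv_comp_const_add φ t s
      rw [this, deriv_comp_const_add, add_zero]
    rw [h2] at key
    exact key
  have hT := aux_taylor hφC2 hHb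
  have hφ0 : φ 0 = f z := by simp [hφ_def]
  have hφ1 : φ 1 = f (z - μ • g z) := by
    simp only [hφ_def, one_smul, hu_def, neg_smul, ← sub_eq_add_neg]
  have hd0 : deriv φ 0 = -(2 * μ) * ‖g z‖ ^ 2 := by
    rw [hderiv]
    simp only [zero_smul, add_zero]
    rw [hgrad z u, hu_def]
    have : ((-μ : ℝ)) • g z = ((-μ : ℝ) : ℂ) • g z := by
      simp [Complex.coe_smul]
    have hre : (((-μ : ℝ) : ℂ) * ⟪g z, g z⟫_ℂ).re = (-μ) * (⟪g z, g z⟫_ℂ).re := by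
      simp [Complex.mul_re]
    have h2 : (⟪g z, g z⟫_ℂ).re = ‖g z‖ ^ 2 := inner_self_eq_norm_sq (𝕜 := ℂ) (g z)
    rw [this, inner_smul_right, hre, h2]
    ring
  have hnu : ‖u‖ ^ 2 = μ ^ 2 * ‖g z‖ ^ 2 := by
    rw [hu_def, norm_smul]
    simp [abs_of_pos hμ, mul_pow]
  rw [hφ0, hφ1, hd0, hnu] at hT
  nlinarith [sq_nonneg ‖g z‖, mul_pos hμ hμ]

/-- Gradient descent with step sizes selected by the backtracking
Armijo–Goldstein algorithm (AGA) initialized at `μ_c τ^{-N}`: each step size satisfies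
`μ_c ≤ μ_t ≤ μ_c τ^{-N}` and either equals `μ_c` or satisfies the Armijo–Goldstein
inequality.  Conclusions: (i) descent inequality at every step, (ii) the squared
gradient norms tend to `0`, (iii) `min_{t ≤ T} ‖∇f(z^t)‖² ≤ f(z⁰)/(μ_c (T+1))`. -/
theorem stmt2 {n : ℕ} (f : EuclideanSpace ℂ (Fin n) → ℝ)
    (g : EuclideanSpace ℂ (Fin n) → EuclideanSpace ℂ (Fin n))
    (hf0 : ∀ z, 0 ≤ f z)
    (hC2 : ContDiff ℝ 2 f)
    (hgrad : ∀ z u, fderiv ℝ f z u = 2 * (⟪g z, u⟫_ℂ).re)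
    (B : ℝ) (hB : 0 < B)
    (hHess : ∀ z u : EuclideanSpace ℂ (Fin n),
      iteratedDeriv 2 (fun t : ℝ => f (z + t • u)) 0 ≤ 2 * B * ‖u‖ ^ 2)
    (μc τ : ℝ) (N : ℕ)
    (hμ0 : 0 < μc) (hμB : μc ≤ 1 / B) (hτ : τ ∈ Set.Ioo (0 : ℝ) 1)
    (z : ℕ → EuclideanSpace ℂ (Fin n)) (μ : ℕ → ℝ)
    (hμlow : ∀ t : ℕ, μc ≤ μ (t + 1))
    (hμhigh : ∀ t : ℕ, μ (t + 1) ≤ μc / τ ^ N)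
    (hAGA : ∀ t : ℕ, μ (t + 1) = μc ∨
      f (z t - μ (t + 1) • g (z t)) - f (z t) ≤ - μ (t + 1) * ‖g (z t)‖ ^ 2)
    (hz : ∀ t : ℕ, z (t + 1) = z t - μ (t + 1) • g (z t)) :
    (∀ t : ℕ, f (z (t + 1)) - f (z t) ≤ - μ (t + 1) * ‖g (z t)‖ ^ 2) ∧
    Filter.Tendsto (fun t : ℕ => ‖g (z t)‖ ^ 2) Filter.atTop (nhds 0) ∧
    (∀ T : ℕ, ∃ t ≤ T, ‖g (z t)‖ ^ 2 ≤ f (z 0) / (μc * (T + 1))) := by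
  have hBμ : μc * B ≤ 1 := (le_div_iff₀ hB).mp hμB
  have part1 : ∀ t : ℕ, f (z (t + 1)) - f (z t) ≤ - μ (t + 1) * ‖g (z t)‖ ^ 2 := by
    intro t
    rcases hAGA t with h | h
    · rw [hz t, h]
      exact aux_descent f g hC2 hgrad B hB hHess μc hμ0 hBμ (z t)
    · rw [hz t]
      exact h
  have key : ∀ t : ℕ, μc * ‖g (z t)‖ ^ 2 ≤ f (z t) - f (z (t + 1)) := by
    intro t
    have h1 := part1 t
    have h2 := mul_le_mul_of_nonneg_right (hμlow t) (sq_nonneg ‖g (z t)‖)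
    nlinarith
  have hsum : ∀ T : ℕ, ∑ t ∈ Finset.range T, ‖g (z t)‖ ^ 2 ≤ f (z 0) / μc := by
    intro T
    rw [le_div_iff₀' hμ0, Finset.mul_sum]
    calc ∑ t ∈ Finset.range T, μc * ‖g (z t)‖ ^ 2
        ≤ ∑ t ∈ Finset.range T, (f (z t) - f (z (t + 1))) :=
          Finset.sum_le_sum fun t _ => key t
      _ = f (z 0) - f (z T) := Finset.sum_range_sub' (fun t => f (z t)) T
      _ ≤ f (z 0) := by linarith [hf0 (z T)]
  have hsummable : Summable fun t : ℕ => ‖g (z t)‖ ^ 2 :=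
    summable_of_sum_range_le (fun t => sq_nonneg _) hsum
  refine ⟨part1, hsummable.tendsto_atTop_zero, ?_⟩
  intro T
  by_contra hcon
  push_neg at hcon
  have hlt : ∑ t ∈ Finset.range (T + 1), f (z 0) / (μc * (T + 1))
      < ∑ t ∈ Finset.range (T + 1), ‖g (z t)‖ ^ 2 := by
    apply Finset.sum_lt_sum_of_nonempty Finset.nonempty_range_add_one
    intro i hi
    exact hcon i (Nat.lt_succ_iff.mp (Finset.mem_range.mp hi))
  rw [Finset.sum_const, Finset.card_range, nsmul_eq_mul] at hlt
  have hcst : (↑(T + 1) : ℝ) * (f (z 0) / (μc * (T + 1))) = f (z 0) / μc := by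
    have : ((T : ℝ) + 1) ≠ 0 := by positivity
    push_cast
    field_simp
  rw [hcst] at hlt
  linarith [hsum (T + 1)]
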